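/- In any swap equilibrium of a 2-type Swap Schelling Game with o > 1 minority agents, the social welfare (sum of all agents' utilities) is at least o − 1. -/

import Mathlib

open SimpleGraph Finset
open scoped Classical

noncomputable def ssgUtil {V A : Type*} [Fintype V] [DecidableEq V]
    (G : SimpleGraph V) [DecidableRel G.Adj]
    {k : ℕ} (c : A → Fin k) (σ : A ≃ V) (i : A) : ℚ :=
  (((G.neighborFinset (σ i)).filter (fun v => c (σ.symm v) = c i)).card : ℚ) /
    (G.degree (σ i) : ℚ)

def ssgSwap {V A : Type*} [DecidableEq V] (σ : A ≃ V) (i j : A) : A ≃ V :=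
  σ.trans (Equiv.swap (σ i) (σ j))

def ssgProfitable {V A : Type*} [Fintype V] [DecidableEq V]
    (G : SimpleGraph V) [DecidableRel G.Adj]
    {k : ℕ} (c : A → Fin k) (σ : A ≃ V) (i j : A) : Prop :=
  c i ≠ c j ∧
    ssgUtil G c σ i < ssgUtil G c (ssgSwap σ i j) i ∧
    ssgUtil G c σ j < ssgUtil G c (ssgSwap σ i j) j

def ssgEquilibrium {V A : Type*} [Fintype V] [DecidableEq V]
    (G : SimpleGraph V) [DecidableRel G.Adj]
    {k : ℕ} (c : A → Fin k) (σ : A ≃ V) : Prop :=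
  ∀ i j : A, ¬ ssgProfitable G c σ i j

def ssgLocalEquilibrium {V A : Type*} [Fintype V] [DecidableEq V]
    (G : SimpleGraph V) [DecidableRel G.Adj]
    {k : ℕ} (c : A → Fin k) (σ : A ≃ V) : Prop :=
  ∀ i j : A, G.Adj (σ i) (σ j) → ¬ ssgProfitable G c σ i j

noncomputable def ssgWelfare {V A : Type*} [Fintype V] [DecidableEq V] [Fintype A]
    (G : SimpleGraph V) [DecidableRel G.Adj]
    {k : ℕ} (c : A → Fin k) (σ : A ≃ V) : ℚ :=
  ∑ i : A, ssgUtil G c σ i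

noncomputable def ssgPhi {V A : Type*} [Fintype V] [DecidableEq V]
    (G : SimpleGraph V) [DecidableRel G.Adj]
    {k : ℕ} (c : A → Fin k) (σ : A ≃ V) : ℕ :=
  (G.edgeFinset.filter (fun e => ∀ u ∈ e, ∀ v ∈ e, c (σ.symm u) = c (σ.symm v))).card


/-!
In an equilibrium, two differently coloured agents that are not adjacent have utilities summing
to at least `1`, since after swapping each would get one minus the other's utility; if they are
adjacent, the sum is at least `1 - 1 / deg` for the degree of one of them. Let `α` and `β` be the
least utilities of an orange and of a blue agent, attained at `i` and `j`. If `α + β ≥ 1`, the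
welfare is at least `o α + b β ≥ o`. Otherwise every orange agent either is one of the
`x = (1 - β) deg j` neighbours of `j`, with utility at least `α`, or has utility at least
`1 - β`; symmetrically for the `a = (1 - α) deg i` blue neighbours of `i`. Writing
`s = 1 - α - β`, this gives welfare at least `o + (b - o)(1 - α) - s (x + a - o)`, and the
adjacent-pair bound `s deg ≤ 1` keeps the last term within `1 + (b - o)(1 - α)`.
-/

lemma fin_two_eq_iff_ne_of_ne {a b : Fin 2} (hab : a ≠ b) (x : Fin 2) : x = a ↔ x ≠ b := by
  omega

lemma Finset.card_nsmul_add_card_nsmul_le_sum {ι M : Type*} [AddCommMonoid M]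
    [PartialOrder M] [IsOrderedAddMonoid M] (s : Finset ι) (p : ι → Prop) [DecidablePred p]
    (f : ι → M) {a b : M} (ha : ∀ i ∈ s, p i → a ≤ f i) (hb : ∀ i ∈ s, ¬ p i → b ≤ f i) :
    #{i ∈ s | p i} • a + #{i ∈ s | ¬ p i} • b ≤ ∑ i ∈ s, f i := by
  rw [← sum_filter_add_sum_filter_not s p]
  gcongr
  · exact card_nsmul_le_sum _ _ _ fun i hi => ha i (mem_filter.mp hi).1 (mem_filter.mp hi).2
  · exact card_nsmul_le_sum _ _ _ fun i hi => hb i (mem_filter.mp hi).1 (mem_filter.mp hi).2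

lemma welfare_bound_ge_sub_one {o b a x p q α β : ℚ} (hob : o ≤ b) (hxo : x ≤ o)
    (hab : a ≤ b) (hα : 0 ≤ α) (hβ : 0 ≤ β) (hp : 0 < p) (hq : 0 < q) (ha : a = (1 - α) * p)
    (hx : x = (1 - β) * q) (hs : α + β < 1)
    (hC : 1 - 1 / q ≤ α + β ∨ 1 - 1 / p ≤ α + β) :
    o - 1 ≤ x * α + (o - x) * (1 - β) + a * β + (b - a) * (1 - α) := by
  set s := 1 - α - β
  have hs0 : 0 < s := by linarith
  have hid : x * α + (o - x) * (1 - β) + a * β + (b - a) * (1 - α) =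
      o + (b - o) * (1 - α) - s * x - s * (a - o) := by ring
  have hbo : 0 ≤ (b - o) * (1 - α) := mul_nonneg (by linarith) (by linarith)
  rw [hid]
  rcases hC with hCq | hCp
  · have hsq : s * q ≤ 1 := by
      have := mul_le_mul_of_nonneg_right hCq hq.le
      rw [sub_mul, one_div_mul_cancel hq.ne'] at this
      linarith
    have hsx : s * x ≤ 1 := by
      rw [hx]; nlinarith
    have hsa : s * (a - o) ≤ (b - o) * (1 - α) := by
      rcases le_total a o with hao | hao
      · exact (mul_nonpos_of_nonneg_of_nonpos hs0.le (by linarith)).trans hbo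
      · calc s * (a - o) ≤ (1 - α) * (a - o) := by gcongr; linarith
          _ ≤ (b - o) * (1 - α) := by nlinarith
    linarith
  · have hsp : s * p ≤ 1 := by
      have := mul_le_mul_of_nonneg_right hCp hp.le
      rw [sub_mul, one_div_mul_cancel hp.ne'] at this
      linarith
    have hsa : s * a ≤ 1 := by
      rw [ha]; nlinarith
    have hsx : s * (x - o) ≤ 0 := mul_nonpos_of_nonneg_of_nonpos hs0.le (by linarith)
    linarith

lemma ssgSwap_comm {V A : Type*} [DecidableEq V] (σ : A ≃ V) (i j : A) :
    ssgSwap σ i j = ssgSwap σ j i := by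
  rw [ssgSwap, ssgSwap, Equiv.swap_comm]

section Utility

variable {V A : Type*} [Fintype V] [DecidableEq V] (G : SimpleGraph V) [DecidableRel G.Adj]
  {k : ℕ} (c : A → Fin k) (σ : A ≃ V)

lemma ssgUtil_nonneg (i : A) : 0 ≤ ssgUtil G c σ i := by
  unfold ssgUtil; positivity

variable [Fintype A]

lemma ssgUtil_eq (j : A) :
    ssgUtil G c σ j = #{i | c i = c j ∧ G.Adj (σ j) (σ i)} / G.degree (σ j) := by
  rw [ssgUtil, card_equiv σ (t := (G.neighborFinset (σ j)).filter (fun v => c (σ.symm v) = c j))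
    (by simp [and_comm])]

lemma ssgUtil_ssgSwap_left {i j : A} (hij : c i ≠ c j) :
    ssgUtil G c (ssgSwap σ i j) i =
      #(({l | c l = c i ∧ G.Adj (σ j) (σ l)} : Finset A).erase i) / G.degree (σ j) := by
  have hi : ssgSwap σ i j i = σ j := by simp [ssgSwap]
  rw [ssgUtil_eq, hi]
  congr 3
  ext l
  rcases eq_or_ne l i with rfl | hli
  · simp [hi]
  rcases eq_or_ne l j with rfl | hlj
  · simp [Ne.symm hij]
  have hl : ssgSwap σ i j l = σ l := by
    simp [ssgSwap, Equiv.swap_apply_of_ne_of_ne, hli, hlj]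
  simp [hl, hli]

end Utility

section TwoTypes

variable {V A : Type*} [Fintype V] [Fintype A]
  {G : SimpleGraph V} [DecidableRel G.Adj] {c : A → Fin 2} {σ : A ≃ V}

lemma card_adj_add_card_adj {t : Fin 2} {j : A} (ht : t ≠ c j) :
    #{l | c l = c j ∧ G.Adj (σ j) (σ l)} + #{l | c l = t ∧ G.Adj (σ j) (σ l)} =
      G.degree (σ j) := by
  rw [← card_union_of_disjoint, ← card_neighborFinset_eq_degree]
  · refine card_equiv σ fun l => ?_
    simp only [mem_union, mem_filter, mem_univ, true_and, mem_neighborFinset]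
    have := fin_two_eq_iff_ne_of_ne ht (c l)
    tauto
  · exact disjoint_filter.mpr fun l _ hl hl' => ht (hl'.1 ▸ hl.1)

variable [DecidableEq V]

lemma card_adj_eq_one_sub_ssgUtil_mul {t : Fin 2} {j : A} (ht : t ≠ c j) :
    (#{l | c l = t ∧ G.Adj (σ j) (σ l)} : ℚ) = (1 - ssgUtil G c σ j) * G.degree (σ j) := by
  have hsplit := card_adj_add_card_adj (G := G) (σ := σ) ht
  rcases eq_or_ne (G.degree (σ j)) 0 with hd | hd
  · rw [hd] at hsplit ⊢
    simp_all
  · rw [ssgUtil_eq, sub_mul, div_mul_cancel₀ _ (by exact_mod_cast hd), ← hsplit]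
    push_cast
    ring

lemma one_sub_ssgUtil_sub_inv_degree_le {i j : A} (hij : c i ≠ c j) (hd : 0 < G.degree (σ j)) :
    1 - ssgUtil G c σ j - 1 / G.degree (σ j) ≤ ssgUtil G c (ssgSwap σ i j) i := by
  set S : Finset A := {l | c l = c i ∧ G.Adj (σ j) (σ l)}
  have herase : (#S : ℚ) ≤ #(S.erase i) + 1 := by
    have := pred_card_le_card_erase (s := S) (a := i)
    exact_mod_cast (by omega : #S ≤ #(S.erase i) + 1)
  have hdq : (0 : ℚ) < G.degree (σ j) := by exact_mod_cast hd
  rw [ssgUtil_ssgSwap_left G c σ hij, le_div_iff₀ hdq]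
  calc (1 - ssgUtil G c σ j - 1 / G.degree (σ j)) * G.degree (σ j) = #S - 1 := by
        rw [card_adj_eq_one_sub_ssgUtil_mul hij]; field_simp
    _ ≤ _ := by linarith

lemma ssgUtil_ssgSwap_of_not_adj {i j : A} (hij : c i ≠ c j) (hd : 0 < G.degree (σ j))
    (hadj : ¬ G.Adj (σ i) (σ j)) :
    ssgUtil G c (ssgSwap σ i j) i = 1 - ssgUtil G c σ j := by
  have hdq : (0 : ℚ) < G.degree (σ j) := by exact_mod_cast hd
  rw [ssgUtil_ssgSwap_left G c σ hij, erase_eq_of_notMem (by simp [G.adj_comm, hadj]),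
    card_adj_eq_one_sub_ssgUtil_mul hij, mul_div_cancel_right₀ _ hdq.ne']

lemma ssgEquilibrium.one_le_ssgUtil_add_of_not_adj (heq : ssgEquilibrium G c σ) {i j : A}
    (hij : c i ≠ c j) (hdi : 0 < G.degree (σ i)) (hdj : 0 < G.degree (σ j))
    (hadj : ¬ G.Adj (σ i) (σ j)) :
    1 ≤ ssgUtil G c σ i + ssgUtil G c σ j := by
  by_contra! h
  refine heq i j ⟨hij, ?_, ?_⟩
  · rw [ssgUtil_ssgSwap_of_not_adj hij hdj hadj]
    linarith
  · rw [ssgSwap_comm, ssgUtil_ssgSwap_of_not_adj hij.symm hdi (by rwa [G.adj_comm])]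
    linarith

lemma ssgEquilibrium.one_sub_inv_degree_le_ssgUtil_add (heq : ssgEquilibrium G c σ) {i j : A}
    (hij : c i ≠ c j) (hdi : 0 < G.degree (σ i)) (hdj : 0 < G.degree (σ j)) :
    1 - 1 / G.degree (σ j) ≤ ssgUtil G c σ i + ssgUtil G c σ j ∨
      1 - 1 / G.degree (σ i) ≤ ssgUtil G c σ i + ssgUtil G c σ j := by
  by_contra! h
  refine heq i j ⟨hij, ?_, ?_⟩
  · linarith [one_sub_ssgUtil_sub_inv_degree_le (σ := σ) hij hdj]
  · linarith [ssgSwap_comm σ i j ▸ one_sub_ssgUtil_sub_inv_degree_le (σ := σ) hij.symm hdi]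

lemma ssgEquilibrium.sum_ssgUtil_ge (heq : ssgEquilibrium G c σ) (hdeg : ∀ v, 0 < G.degree v)
    {t : Fin 2} {j : A} (ht : t ≠ c j) {m : ℚ} (hm : ∀ i, c i = t → m ≤ ssgUtil G c σ i) :
    (#{i | c i = t ∧ G.Adj (σ j) (σ i)} : ℚ) * m +
        (#{i | c i = t} - #{i | c i = t ∧ G.Adj (σ j) (σ i)} : ℚ) * (1 - ssgUtil G c σ j) ≤
      ∑ i ∈ {i | c i = t}, ssgUtil G c σ i := by
  have hbound := card_nsmul_add_card_nsmul_le_sum {i | c i = t}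
    (fun i => G.Adj (σ j) (σ i)) (ssgUtil G c σ) (a := m) (b := 1 - ssgUtil G c σ j)
    (fun i hi _ => hm i (mem_filter.mp hi).2)
    (fun i hi hadj => by
      have := heq.one_le_ssgUtil_add_of_not_adj ((mem_filter.mp hi).2 ▸ ht) (hdeg _) (hdeg _)
        (fun h => hadj h.symm)
      linarith)
  have hcard := card_filter_add_card_filter_not (s := {i | c i = t})
    (fun i => G.Adj (σ j) (σ i))
  simp only [filter_filter, nsmul_eq_mul] at hbound hcard
  rw [← hcard]
  push_cast
  linarith

lemma ssgWelfare_eq_sum_add_sum {i j : A} (hij : c i ≠ c j) :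
    ssgWelfare G c σ =
      ∑ l ∈ {l | c l = c i}, ssgUtil G c σ l + ∑ l ∈ {l | c l = c j}, ssgUtil G c σ l := by
  rw [ssgWelfare, ← sum_filter_add_sum_filter_not univ (fun l => c l = c i)]
  congr 2
  ext l
  simp [fin_two_eq_iff_ne_of_ne hij.symm]

lemma ssgEquilibrium.card_sub_one_le_ssgWelfare (heq : ssgEquilibrium G c σ)
    (hdeg : ∀ v, 0 < G.degree v) {i j : A} (hij : c i ≠ c j)
    (hi : ∀ l, c l = c i → ssgUtil G c σ i ≤ ssgUtil G c σ l)
    (hj : ∀ l, c l = c j → ssgUtil G c σ j ≤ ssgUtil G c σ l)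
    (hcard : #{l | c l = c i} ≤ #{l | c l = c j}) :
    (#{l | c l = c i} : ℚ) - 1 ≤ ssgWelfare G c σ := by
  set α := ssgUtil G c σ i
  set β := ssgUtil G c σ j
  have hα := ssgUtil_nonneg G c σ i
  have hβ := ssgUtil_nonneg G c σ j
  have hcardq : (#{l | c l = c i} : ℚ) ≤ #{l | c l = c j} := by exact_mod_cast hcard
  rw [ssgWelfare_eq_sum_add_sum hij]
  by_cases hs : 1 ≤ α + β
  · have hO := card_nsmul_le_sum ({l | c l = c i} : Finset A) _ α
      fun l hl => hi l (mem_filter.mp hl).2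
    have hB := card_nsmul_le_sum ({l | c l = c j} : Finset A) _ β
      fun l hl => hj l (mem_filter.mp hl).2
    rw [nsmul_eq_mul] at hO hB
    nlinarith
  · have hO := heq.sum_ssgUtil_ge hdeg hij hi
    have hB := heq.sum_ssgUtil_ge hdeg hij.symm hj
    have hxo : #{l | c l = c i ∧ G.Adj (σ j) (σ l)} ≤ #{l | c l = c i} :=
      card_le_card fun l => by simp +contextual
    have hab : #{l | c l = c j ∧ G.Adj (σ i) (σ l)} ≤ #{l | c l = c j} :=
      card_le_card fun l => by simp +contextual
    have := welfare_bound_ge_sub_one hcardq (by exact_mod_cast hxo) (by exact_mod_cast hab)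
      hα hβ (by exact_mod_cast hdeg (σ i)) (by exact_mod_cast hdeg (σ j))
      (card_adj_eq_one_sub_ssgUtil_mul hij.symm) (card_adj_eq_one_sub_ssgUtil_mul hij)
      (not_le.mp hs) (heq.one_sub_inv_degree_le_ssgUtil_add hij (hdeg _) (hdeg _))
    linarith

end TwoTypes

theorem stmt7 {V A : Type*} [Fintype V] [DecidableEq V] [Fintype A]
    (G : SimpleGraph V) [DecidableRel G.Adj] (hconn : G.Connected)
    (c : A → Fin 2) (o n : ℕ)
    (ho : o = (Finset.univ.filter (fun i : A => c i = 0)).card)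
    (hn : n = Fintype.card A)
    (ho1 : 1 < o) (hmin : o ≤ n - o)
    (σ : A ≃ V) (heq : ssgEquilibrium G c σ) :
    (o : ℚ) - 1 ≤ ssgWelfare G c σ := by
  have hsplit : #{i | c i = 0} + #{i | c i = 1} = n := by
    rw [hn, ← card_univ, ← card_filter_add_card_filter_not (s := univ) (fun i => c i = 0)]
    simp [fin_two_eq_iff_ne_of_ne (by decide : (1 : Fin 2) ≠ 0)]
  have : Nontrivial V := by
    rw [← Fintype.one_lt_card_iff_nontrivial, ← Fintype.card_congr σ]
    omega
  have hdeg : ∀ v, 0 < G.degree v := fun v => hconn.preconnected.degree_pos_of_nontrivial v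
  obtain ⟨i, hi, hi_min⟩ := exists_min_image {i | c i = 0} (ssgUtil G c σ)
    (card_pos.mp (by omega))
  obtain ⟨j, hj, hj_min⟩ := exists_min_image {i | c i = 1} (ssgUtil G c σ)
    (card_pos.mp (by omega))
  simp only [mem_filter, mem_univ, true_and] at hi hj hi_min hj_min
  have := heq.card_sub_one_le_ssgWelfare hdeg (i := i) (j := j) (by rw [hi, hj]; decide)
    (by rwa [hi]) (by rwa [hj]) (by rw [hi, hj]; omega)
  rwa [hi, ← ho] at this
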